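/- Let A : ℝ^{n}_{>0} → ℝ^{d×d} be affine in its parameters, with A(ρ) Metzler for all ρ > 0, decomposed so that A(ρ_dg, ρ_cv, ρ_ct) is entrywise monotone: decreasing in ρ_dg and increasing in ρ_ct. Suppose A(ρ_dg, ρ_cv, 0) is Hurwitz for all positive (ρ_dg, ρ_cv), and write A(ρ) = A_ρ + S_ct D(ρ_ct) W_ct with S_ct, W_ct entrywise nonnegative and D(ρ_ct) diagonal positive, where A_ρ = A(ρ_dg, ρ_cv, 0). Then A(ρ) is Hurwitz stable for all ρ > 0 if and only if the spectral radius of W_ct A_ρ⁻¹ S_ct equals 0 for all positive (ρ_dg, ρ_cv). -/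

import Mathlib

open Matrix

/-- A square real matrix is Metzler if all its off-diagonal entries are nonnegative. -/
def IsMetzler {d : ℕ} (M : Matrix (Fin d) (Fin d) ℝ) : Prop :=
  ∀ i j, i ≠ j → 0 ≤ M i j

/-- A square real matrix is Hurwitz stable if every (complex) eigenvalue has
negative real part. -/
def IsHurwitz {d : ℕ} (M : Matrix (Fin d) (Fin d) ℝ) : Prop :=
  ∀ z ∈ spectrum ℂ (M.map (Complex.ofReal)), z.re < 0
/-- The spectral radius of a real square matrix: the maximum modulus of its
(complex) eigenvalues. -/
noncomputable def specRad {n : ℕ} (N : Matrix (Fin n) (Fin n) ℝ) : ℝ :=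
  sSup {x : ℝ | ∃ z ∈ spectrum ℂ (N.map (Complex.ofReal)), x = ‖z‖}

/-!
For a Metzler matrix `M`, Hurwitz stability is equivalent to `M` being invertible with `M⁻¹ ≤ 0`
entrywise: a positive vector with `M v < 0` gives a minimum principle, and such a vector persists
along the shifts `M - u • 1`, `u ≥ 0`, from large `u` down to `u = 0` because these shifts stay
invertible and nonpositivity of the inverse passes to limits.

Write `A(ρ) = A_ρ + S D W` and `N = W A_ρ⁻¹ S ≤ 0`. By the Woodbury identity, `A(ρ)⁻¹` is
`A_ρ⁻¹ - A_ρ⁻¹ S D (1 + N D)⁻¹ W A_ρ⁻¹`. If `N` is nilpotent, so is `N D`, and `(1 + N D)⁻¹` is a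
finite geometric series of nonnegative matrices, whence `A(ρ)⁻¹ ≤ 0`. Conversely, if every
`A_ρ + t S W` is Hurwitz, then `(1 + t N)⁻¹ = 1 - t W (A_ρ + t S W)⁻¹ S ≥ 0` for all `t > 0`, and
applying this at `t = 1 / |z|` to the modulus of an eigenvector of `N` for an eigenvalue `z ≠ 0`
forces that eigenvector to vanish.
-/

namespace Matrix

variable {l m n : Type*}

def IsNonneg (A : Matrix m n ℝ) : Prop := ∀ i j, 0 ≤ A i j

theorem IsNonneg.mul [Fintype m] {A : Matrix l m ℝ} {B : Matrix m n ℝ} (hA : A.IsNonneg)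
    (hB : B.IsNonneg) : (A * B).IsNonneg := fun i j =>
  Finset.sum_nonneg fun k _ => mul_nonneg (hA i k) (hB k j)

theorem IsNonneg.add {A B : Matrix m n ℝ} (hA : A.IsNonneg) (hB : B.IsNonneg) :
    (A + B).IsNonneg := fun i j => add_nonneg (hA i j) (hB i j)

theorem IsNonneg.smul {A : Matrix m n ℝ} (hA : A.IsNonneg) {c : ℝ} (hc : 0 ≤ c) :
    (c • A).IsNonneg := fun i j => mul_nonneg hc (hA i j)

theorem isNonneg_one [DecidableEq n] : (1 : Matrix n n ℝ).IsNonneg := fun i j => by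
  rw [one_apply]; split_ifs <;> norm_num

theorem IsNonneg.pow [Fintype n] [DecidableEq n] {A : Matrix n n ℝ} (hA : A.IsNonneg) (k : ℕ) :
    (A ^ k).IsNonneg := by
  induction k with
  | zero => exact isNonneg_one
  | succ k ih => rw [pow_succ]; exact ih.mul hA

theorem IsNonneg.mulVec_nonneg [Fintype n] {A : Matrix m n ℝ} (hA : A.IsNonneg) {x : n → ℝ}
    (hx : 0 ≤ x) : 0 ≤ A *ᵥ x := fun i =>
  Finset.sum_nonneg fun j _ => mul_nonneg (hA i j) (hx j)

theorem IsNonneg.pow_apply_le [Fintype n] [DecidableEq n] {A B : Matrix n n ℝ} (hA : A.IsNonneg)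
    (hAB : ∀ i j, A i j ≤ B i j) (k : ℕ) (i j : n) : (A ^ k) i j ≤ (B ^ k) i j := by
  induction k generalizing j with
  | zero => rfl
  | succ k ih =>
    simp only [pow_succ, mul_apply]
    exact Finset.sum_le_sum fun l _ =>
      mul_le_mul (ih l) (hAB l j) (hA l j) ((hA.pow k i l).trans (ih l))

theorem IsNonneg.mul_diagonal [Fintype n] [DecidableEq n] {A : Matrix m n ℝ} (hA : A.IsNonneg)
    {d : n → ℝ} (hd : 0 ≤ d) : (A * diagonal d).IsNonneg := fun i j => by
  rw [Matrix.mul_diagonal]; exact mul_nonneg (hA i j) (hd j)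

theorem IsNonneg.isNilpotent_mul_diagonal [Fintype n] [DecidableEq n] {P : Matrix n n ℝ}
    (hP : P.IsNonneg) (hPnil : IsNilpotent P) {d : n → ℝ} (hd : 0 ≤ d) :
    IsNilpotent (P * diagonal d) := by
  obtain ⟨k, hk⟩ := hPnil
  have hPd := hP.mul_diagonal hd
  refine ⟨k, ext fun i j => le_antisymm ?_ ((hPd.pow k) i j)⟩
  calc ((P * diagonal d) ^ k) i j ≤ (((∑ l, d l) • P) ^ k) i j := by
        refine hPd.pow_apply_le (fun a b => ?_) k i j
        rw [Matrix.mul_diagonal, smul_apply, smul_eq_mul, mul_comm]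
        exact mul_le_mul_of_nonneg_right
          (Finset.single_le_sum (fun l _ => hd l) (Finset.mem_univ b)) (hP a b)
    _ = 0 := by rw [smul_pow, hk, smul_zero, zero_apply]

theorem IsNonneg.inv_one_sub_of_isNilpotent [Fintype n] [DecidableEq n] {Q : Matrix n n ℝ}
    (hQ : Q.IsNonneg) (hQnil : IsNilpotent Q) : IsUnit (1 - Q).det ∧ (1 - Q)⁻¹.IsNonneg := by
  obtain ⟨k, hk⟩ := hQnil
  have hleft : (∑ i ∈ Finset.range k, Q ^ i) * (1 - Q) = 1 := by
    rw [geom_sum_mul_neg, hk, sub_zero]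
  refine ⟨isUnit_det_of_left_inverse hleft, ?_⟩
  rw [inv_eq_left_inv hleft]
  intro i j
  rw [sum_apply]
  exact Finset.sum_nonneg fun l _ => hQ.pow l i j

theorem exists_mulVec_eq_smul_of_mem_spectrum {K : Type*} [Field K] [Fintype n] [DecidableEq n]
    {A : Matrix n n K} {z : K} (hz : z ∈ spectrum K A) : ∃ w ≠ 0, A *ᵥ w = z • w := by
  rw [← spectrum_toLin', ← Module.End.hasEigenvalue_iff_mem_spectrum] at hz
  obtain ⟨w, hw⟩ := hz.exists_hasEigenvector
  exact ⟨w, hw.2, by simpa using hw.apply_eq_smul⟩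

theorem norm_mul_norm_le_of_mulVec_eq_smul [Fintype n] (Q : Matrix n n ℝ) {w : n → ℂ} {z : ℂ}
    (h : Q.map Complex.ofReal *ᵥ w = z • w) (i : n) :
    ‖z‖ * ‖w i‖ ≤ ∑ j, |Q i j| * ‖w j‖ :=
  calc ‖z‖ * ‖w i‖ = ‖(Q.map Complex.ofReal *ᵥ w) i‖ := by
        rw [h, Pi.smul_apply, smul_eq_mul, norm_mul]
    _ ≤ ∑ j, ‖(Q i j : ℂ) * w j‖ := norm_sum_le _ _
    _ = ∑ j, |Q i j| * ‖w j‖ := by simp only [norm_mul, Complex.norm_real, Real.norm_eq_abs]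

theorem isNilpotent_of_forall_mem_spectrum_eq_zero {K : Type*} [Field K] [IsAlgClosed K]
    [Fintype n] [DecidableEq n] {A : Matrix n n K} (h : ∀ z ∈ spectrum K A, z = 0) :
    IsNilpotent A := by
  have hsplit := IsAlgClosed.splits A.charpoly
  have hroots : A.charpoly.roots = Multiset.replicate (Fintype.card n) 0 := by
    refine Multiset.eq_replicate.mpr ⟨?_, fun z hz => h z ?_⟩
    · rw [← hsplit.natDegree_eq_card_roots, charpoly_natDegree_eq_dim]
    · exact mem_spectrum_iff_isRoot_charpoly.mpr (Polynomial.mem_roots'.mp hz).2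
  have hX : A.charpoly = Polynomial.X ^ Fintype.card n := by
    rw [hsplit.eq_prod_roots_of_monic (charpoly_monic A), hroots]
    simp
  exact ⟨Fintype.card n, by simpa [hX] using aeval_self_charpoly A⟩

theorem one_sub_mul_inv_mul_mul_one_add {K : Type*} [CommRing K] [Fintype m] [Fintype n]
    [DecidableEq m] [DecidableEq n] {A : Matrix n n K} (U : Matrix n m K) (V : Matrix m n K)
    (hA : IsUnit A.det) (hAUV : IsUnit (A + U * V).det) :
    (1 - V * (A + U * V)⁻¹ * U) * (1 + V * A⁻¹ * U) = 1 := by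
  have hunit : IsUnit (1 + V * A⁻¹ * U).det := by
    rw [det_add_mul U V hA] at hAUV
    exact (IsUnit.mul_iff.mp hAUV).2
  have hAinv : IsUnit A⁻¹ := (isUnit_iff_isUnit_det _).mpr (isUnit_nonsing_inv_det A hA)
  have hwood := add_mul_mul_inv_eq_sub 1 V A⁻¹ U isUnit_one hAinv
    (by rwa [nonsing_inv_nonsing_inv A hA, inv_one, Matrix.mul_one, isUnit_iff_isUnit_det])
  simp only [inv_one, Matrix.one_mul, Matrix.mul_one, nonsing_inv_nonsing_inv A hA] at hwood
  rw [← hwood]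
  exact nonsing_inv_mul _ hunit

end Matrix

theorem IsHurwitz.isUnit_det_sub_smul_one {n : ℕ} {M : Matrix (Fin n) (Fin n) ℝ}
    (hH : IsHurwitz M) {u : ℝ} (hu : 0 ≤ u) : IsUnit (M - u • 1).det := by
  by_contra hdet
  have hmem : (u : ℂ) ∈ spectrum ℂ (M.map Complex.ofReal) := by
    have hmap : algebraMap ℂ _ (u : ℂ) - M.map Complex.ofReal =
        -Complex.ofRealHom.mapMatrix (M - u • 1) := by
      ext i j
      rcases eq_or_ne i j with rfl | hij
      · simp [algebraMap_eq_diagonal]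
      · simp [algebraMap_eq_diagonal, one_apply_ne hij, hij]
    rw [spectrum.mem_iff, hmap, IsUnit.neg_iff, isUnit_iff_isUnit_det, ← RingHom.map_det,
      isUnit_iff_ne_zero, Complex.ofRealHom_eq_coe, Complex.ofReal_ne_zero, ← isUnit_iff_ne_zero]
    exact hdet
  exact (hH _ hmem).not_ge (by simpa using hu)

namespace IsMetzler

variable {n : ℕ} {M : Matrix (Fin n) (Fin n) ℝ}

theorem sub_smul_one (hM : IsMetzler M) (u : ℝ) : IsMetzler (M - u • 1) := fun i j hij => by
  simpa [one_apply_ne hij] using hM i j hij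

theorem of_forall_pos_add_smul {E : Matrix (Fin n) (Fin n) ℝ}
    (h : ∀ ε : ℝ, 0 < ε → IsMetzler (M + ε • E)) : IsMetzler M := fun i j hij => by
  have hcont : Continuous fun ε : ℝ => (M + ε • E) i j := by
    simp only [Matrix.add_apply, Matrix.smul_apply, smul_eq_mul]; fun_prop
  have hlim : Filter.Tendsto (fun ε : ℝ => (M + ε • E) i j) (nhdsWithin 0 (Set.Ioi 0))
      (nhds (M i j)) := by
    simpa using hcont.continuousWithinAt (s := Set.Ioi 0) (x := 0) |>.tendsto
  exact ge_of_tendsto hlim (eventually_nhdsWithin_of_forall fun ε hε => h ε hε i j hij)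

theorem mulVec_apply_nonneg (hM : IsMetzler M) {x : Fin n → ℝ} (hx : 0 ≤ x) {i : Fin n}
    (hxi : x i = 0) : 0 ≤ (M *ᵥ x) i :=
  show 0 ≤ ∑ j, M i j * x j from Finset.sum_nonneg fun j _ => by
    rcases eq_or_ne i j with rfl | hij
    · simp [hxi]
    · exact mul_nonneg (hM i j hij) (hx j)

theorem nonneg_of_mulVec_nonpos (hM : IsMetzler M) {v : Fin n → ℝ} (hv : ∀ i, 0 < v i)
    (hMv : ∀ i, (M *ᵥ v) i < 0) {y : Fin n → ℝ} (hMy : M *ᵥ y ≤ 0) : 0 ≤ y := by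
  by_contra hy
  obtain ⟨i, hi⟩ : ∃ i, y i < 0 := by simpa [Pi.le_def] using hy
  obtain ⟨i₀, -, hi₀⟩ := Finset.exists_min_image Finset.univ (fun i => y i / v i)
    ⟨i, Finset.mem_univ i⟩
  -- `c • v` is the largest multiple of `v` below `y`; it touches `y` at `i₀`.
  set c := y i₀ / v i₀
  have hc : c < 0 := (hi₀ i (Finset.mem_univ i)).trans_lt (div_neg_of_neg_of_pos hi (hv i))
  have hz : 0 ≤ y - c • v := fun j => by
    have := hi₀ j (Finset.mem_univ j)
    rw [le_div_iff₀ (hv j)] at this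
    simpa using this
  have hzi₀ : (y - c • v) i₀ = 0 := by
    simp [c, div_mul_cancel₀ _ (hv i₀).ne']
  have := hM.mulVec_apply_nonneg hz hzi₀
  rw [mulVec_sub, mulVec_smul, Pi.sub_apply, Pi.smul_apply, smul_eq_mul] at this
  have hMyi₀ : (M *ᵥ y) i₀ ≤ 0 := hMy i₀
  linarith [mul_pos_of_neg_of_neg hc (hMv i₀)]

theorem isUnit_det_and_neg_inv_of_mulVec_neg (hM : IsMetzler M) {v : Fin n → ℝ}
    (hv : ∀ i, 0 < v i) (hMv : ∀ i, (M *ᵥ v) i < 0) : IsUnit M.det ∧ (-M⁻¹).IsNonneg := by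
  have hpos := fun y (hy : M *ᵥ y ≤ 0) => hM.nonneg_of_mulVec_nonpos hv hMv hy
  have hU : IsUnit M := mulVec_injective_iff_isUnit.mp fun x y hxy => by
    have hxy' : M *ᵥ (x - y) = 0 := by rw [mulVec_sub, hxy, sub_self]
    have hyx' : M *ᵥ (y - x) = 0 := by rw [mulVec_sub, hxy, sub_self]
    exact le_antisymm (sub_nonneg.mp (hpos _ hyx'.le)) (sub_nonneg.mp (hpos _ hxy'.le))
  rw [isUnit_iff_isUnit_det] at hU
  refine ⟨hU, fun i j => ?_⟩
  have hcol : M *ᵥ -(M⁻¹ *ᵥ Pi.single j 1) = -Pi.single j 1 := by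
    rw [mulVec_neg, mulVec_mulVec, mul_nonsing_inv _ hU, one_mulVec]
  have := hpos _ (hcol ▸ neg_nonpos.mpr (Pi.single_nonneg.mpr zero_le_one)) i
  simpa [mulVec_single_one] using this

theorem exists_pos_mulVec_neg_of_neg_inv (hM : IsMetzler M) (hU : IsUnit M.det)
    (hinv : (-M⁻¹).IsNonneg) :
    ∃ v : Fin n → ℝ, (∀ i, 0 < v i) ∧ ∀ i, (M *ᵥ v) i < 0 := by
  have hMv : M *ᵥ (-M⁻¹ *ᵥ 1) = -1 := by
    rw [mulVec_mulVec, mul_neg, mul_nonsing_inv _ hU, neg_mulVec, one_mulVec]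
  have hv : 0 ≤ -M⁻¹ *ᵥ 1 := hinv.mulVec_nonneg zero_le_one
  refine ⟨_, fun i => (hv i).lt_of_ne fun h => ?_, fun i => by simp [hMv]⟩
  have := hM.mulVec_apply_nonneg hv h.symm
  norm_num [hMv] at this

theorem isHurwitz_of_neg_inv (hM : IsMetzler M) (hU : IsUnit M.det) (hinv : (-M⁻¹).IsNonneg) :
    IsHurwitz M := by
  intro z hz
  by_contra! hre
  obtain ⟨w, hw0, hw⟩ := exists_mulVec_eq_smul_of_mem_spectrum hz
  -- `M + s • 1` is nonnegative with eigenvalue `z + s`, of modulus `≥ s`; hence `M |w| ≥ 0`.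
  set s := ∑ i, |M i i|
  have hs : ∀ i, -M i i ≤ s := fun i =>
    (neg_le_abs _).trans (Finset.single_le_sum (fun k _ => abs_nonneg (M k k)) (Finset.mem_univ i))
  have hB : (M + s • 1).IsNonneg := fun i j => by
    rcases eq_or_ne i j with rfl | hij
    · simp only [Matrix.add_apply, Matrix.smul_apply, one_apply_eq, smul_eq_mul, mul_one]
      linarith [hs i]
    · simpa [one_apply_ne hij] using hM i j hij
  have hBw : (M + s • 1).map Complex.ofReal *ᵥ w = (z + s) • w := by
    rw [Matrix.map_add _ (by simp), Matrix.map_smul _ _ (by simp), Matrix.map_one _ (by simp)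
      (by simp), add_mulVec, hw, smul_mulVec, one_mulVec, add_smul, Complex.coe_smul]
  set x := fun i => ‖w i‖
  have hMx : 0 ≤ M *ᵥ x := fun i => by
    have h1 : ‖z + s‖ * x i ≤ ∑ j, |(M + s • 1) i j| * x j :=
      norm_mul_norm_le_of_mulVec_eq_smul _ hBw i
    have h2 : s ≤ ‖z + s‖ := by
      refine le_trans ?_ (Complex.re_le_norm _)
      simp only [Complex.add_re, Complex.ofReal_re]
      linarith
    have h3 : ∑ j, |(M + s • 1) i j| * x j = (M *ᵥ x) i + s * x i := by
      simp_rw [abs_of_nonneg (hB i _)]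
      change ((M + s • 1) *ᵥ x) i = _
      rw [add_mulVec, smul_mulVec, one_mulVec]
      rfl
    have h4 := mul_le_mul_of_nonneg_right h2 (norm_nonneg (w i))
    show (0 : ℝ) ≤ _
    linarith
  have hx : x ≤ 0 := by
    have : x = -(-M⁻¹ *ᵥ (M *ᵥ x)) := by
      rw [mulVec_mulVec, neg_mul, nonsing_inv_mul _ hU, neg_mulVec, neg_neg, one_mulVec]
    rw [this]
    exact neg_nonpos.mpr (hinv.mulVec_nonneg hMx)
  exact hw0 (funext fun i => norm_eq_zero.mp (le_antisymm (hx i) (norm_nonneg _)))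

theorem exists_pos_mulVec_neg_of_isHurwitz (hM : IsMetzler M) (hH : IsHurwitz M) :
    ∃ v : Fin n → ℝ, (∀ i, 0 < v i) ∧ ∀ i, (M *ᵥ v) i < 0 := by
  set T := {u : ℝ | ∃ v : Fin n → ℝ, (∀ i, 0 < v i) ∧ ∀ i, ((M - u • 1) *ᵥ v) i < 0}
  suffices Set.Ici 0 ⊆ T by simpa [T] using this (Set.mem_Ici.mpr le_rfl)
  have hshift : ∀ (u : ℝ) (v : Fin n → ℝ) i, ((M - u • 1) *ᵥ v) i = (M *ᵥ v) i - u * v i :=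
    fun u v i => by simp [sub_mulVec, smul_mulVec]
  refine isPreconnected_Ici.subset_of_closure_inter_subset ?_ ?_ ?_
  · simp only [T, Set.ofPred_exists]
    refine isOpen_iUnion fun v => ?_
    by_cases hv : ∀ i, 0 < v i
    · have hset : {u : ℝ | (∀ i, 0 < v i) ∧ ∀ i, ((M - u • 1) *ᵥ v) i < 0} =
          ⋂ i, {u | (M *ᵥ v) i - u * v i < 0} := by
        ext; simp [hv, hshift]
      rw [hset]
      exact isOpen_iInter_of_finite fun i => isOpen_lt (by fun_prop) continuous_const
    · simp [hv]
  · refine ⟨1 + ∑ i, |(M *ᵥ 1) i|, Set.mem_Ici.mpr (by positivity), 1, fun _ => one_pos,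
      fun i => ?_⟩
    have := (le_abs_self _).trans
      (Finset.single_le_sum (fun k _ => abs_nonneg ((M *ᵥ 1) k)) (Finset.mem_univ i))
    simp only [hshift, Pi.one_apply, mul_one]
    linarith
  · rintro a ⟨ha, ha0⟩
    have hU := hH.isUnit_det_sub_smul_one ha0
    have hcont : ContinuousAt (fun u : ℝ => (M - u • 1)⁻¹) a := by
      refine (continuousAt_matrix_inv _ ?_).comp (by fun_prop)
      rw [Ring.inverse_eq_inv']
      exact continuousAt_inv₀ hU.ne_zero
    refine (hM.sub_smul_one a).exists_pos_mulVec_neg_of_neg_inv hU fun i j => ?_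
    refine ContinuousWithinAt.closure_le (f := fun _ => 0) (g := fun u => -(M - u • 1)⁻¹ i j)
      ha continuousWithinAt_const ?_ fun u ⟨v, hv, hMv⟩ =>
        ((hM.sub_smul_one u).isUnit_det_and_neg_inv_of_mulVec_neg hv hMv).2 i j
    exact (((continuous_apply j).comp (continuous_apply i)).continuousAt.comp hcont).neg
      |>.continuousWithinAt

theorem isHurwitz_iff (hM : IsMetzler M) : IsHurwitz M ↔ IsUnit M.det ∧ (-M⁻¹).IsNonneg := by
  refine ⟨fun hH => ?_, fun ⟨hU, hinv⟩ => hM.isHurwitz_of_neg_inv hU hinv⟩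
  obtain ⟨v, hv, hMv⟩ := hM.exists_pos_mulVec_neg_of_isHurwitz hH
  exact hM.isUnit_det_and_neg_inv_of_mulVec_neg hv hMv

end IsMetzler

theorem specRad_eq_zero_iff {n : ℕ} (N : Matrix (Fin n) (Fin n) ℝ) :
    specRad N = 0 ↔ ∀ z ∈ spectrum ℂ (N.map Complex.ofReal), z = 0 := by
  have hset : {x : ℝ | ∃ z ∈ spectrum ℂ (N.map Complex.ofReal), x = ‖z‖} =
      (‖·‖) '' spectrum ℂ (N.map Complex.ofReal) := by
    ext; simp [eq_comm]
  rw [specRad, hset]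
  constructor
  · intro h z hz
    have := le_csSup ((finite_spectrum (N.map Complex.ofReal)).image (‖·‖)).bddAbove
      (Set.mem_image_of_mem _ hz)
    exact norm_eq_zero.mp (le_antisymm (h ▸ this) (norm_nonneg z))
  · intro h
    have h0 : (‖·‖) '' spectrum ℂ (N.map Complex.ofReal) ⊆ {0} := by
      rintro _ ⟨z, hz, rfl⟩
      simp [h z hz]
    rcases Set.subset_singleton_iff_eq.mp h0 with h0 | h0 <;> simp [h0]

theorem isNilpotent_of_specRad_eq_zero {n : ℕ} {N : Matrix (Fin n) (Fin n) ℝ}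
    (h : specRad N = 0) : IsNilpotent N := by
  obtain ⟨k, hk⟩ := isNilpotent_of_forall_mem_spectrum_eq_zero ((specRad_eq_zero_iff N).mp h)
  refine ⟨k, map_injective Complex.ofReal_injective ?_⟩
  change (N ^ k).map Complex.ofReal = (0 : Matrix _ _ ℝ).map Complex.ofReal
  rw [Matrix.map_zero _ Complex.ofReal_zero]
  exact (Matrix.map_pow N Complex.ofRealHom k).trans hk

theorem specRad_eq_zero_of_forall_exists_nonneg_inv {n : ℕ} {N : Matrix (Fin n) (Fin n) ℝ}
    (hN : (-N).IsNonneg)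
    (hres : ∀ t : ℝ, 0 < t → ∃ G : Matrix (Fin n) (Fin n) ℝ, G.IsNonneg ∧ G * (1 + t • N) = 1) :
    specRad N = 0 := by
  refine (specRad_eq_zero_iff N).mpr fun z hz => ?_
  by_contra hz0
  obtain ⟨w, hw0, hw⟩ := exists_mulVec_eq_smul_of_mem_spectrum hz
  set x := fun i => ‖w i‖
  obtain ⟨G, hG, hGN⟩ := hres ‖z‖⁻¹ (inv_pos.mpr (norm_pos_iff.mpr hz0))
  have hsub : 0 ≤ -((1 + ‖z‖⁻¹ • N) *ᵥ x) := fun i => by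
    have h1 : ‖z‖ * x i ≤ ∑ j, |N i j| * x j := norm_mul_norm_le_of_mulVec_eq_smul N hw i
    have h2 : ∑ j, |N i j| * x j = -(N *ᵥ x) i := by
      simp_rw [abs_of_nonpos (neg_nonneg.mp (hN i _))]
      simp [mulVec, dotProduct, Finset.sum_neg_distrib]
    have h3 : ‖z‖ * (-((1 + ‖z‖⁻¹ • N) *ᵥ x)) i = -(‖z‖ * x i) - (N *ᵥ x) i := by
      simp [add_mulVec, smul_mulVec, mul_add, norm_ne_zero_iff.mpr hz0]
      ring
    exact nonneg_of_mul_nonneg_right (by rw [h3]; linarith) (norm_pos_iff.mpr hz0)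
  have hx : x ≤ 0 := by
    have : x = -(G *ᵥ -((1 + ‖z‖⁻¹ • N) *ᵥ x)) := by
      rw [mulVec_neg, neg_neg, mulVec_mulVec, hGN, one_mulVec]
    rw [this]
    exact neg_nonpos.mpr (hG.mulVec_nonneg hsub)
  exact hw0 (funext fun i => norm_eq_zero.mp (le_antisymm (hx i) (norm_nonneg _)))

theorem specRad_mul_inv_mul_eq_zero_of_forall_add_smul {d m : ℕ} {A : Matrix (Fin d) (Fin d) ℝ}
    {S : Matrix (Fin d) (Fin m) ℝ} {W : Matrix (Fin m) (Fin d) ℝ} (hA : IsUnit A.det)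
    (hAinv : (-A⁻¹).IsNonneg) (hS : S.IsNonneg) (hW : W.IsNonneg)
    (h : ∀ t : ℝ, 0 < t → IsUnit (A + t • (S * W)).det ∧ (-(A + t • (S * W))⁻¹).IsNonneg) :
    specRad (W * A⁻¹ * S) = 0 := by
  refine specRad_eq_zero_of_forall_exists_nonneg_inv ?_ fun t ht => ?_
  · simpa [Matrix.mul_neg, Matrix.neg_mul] using (hW.mul hAinv).mul hS
  obtain ⟨hU, hinv⟩ := h t ht
  refine ⟨1 + t • (W * -(A + t • (S * W))⁻¹ * S),
    isNonneg_one.add (((hW.mul hinv).mul hS).smul ht.le), ?_⟩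
  have key := one_sub_mul_inv_mul_mul_one_add S (t • W) hA (by rwa [Matrix.mul_smul])
  simpa [Matrix.mul_smul, Matrix.smul_mul, Matrix.mul_neg, Matrix.neg_mul, sub_eq_add_neg]
    using key

theorem isUnit_det_add_and_neg_inv_of_isNilpotent {d m : ℕ} {A : Matrix (Fin d) (Fin d) ℝ}
    {S : Matrix (Fin d) (Fin m) ℝ} {W : Matrix (Fin m) (Fin d) ℝ} {δ : Fin m → ℝ}
    (hA : IsUnit A.det) (hAinv : (-A⁻¹).IsNonneg) (hS : S.IsNonneg) (hW : W.IsNonneg)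
    (hδ : 0 ≤ δ) (hnil : IsNilpotent (W * A⁻¹ * S)) :
    IsUnit (A + S * diagonal δ * W).det ∧ (-(A + S * diagonal δ * W)⁻¹).IsNonneg := by
  have hP : (-(W * A⁻¹ * S)).IsNonneg := by
    simpa [Matrix.mul_neg, Matrix.neg_mul] using (hW.mul hAinv).mul hS
  obtain ⟨hG, hGnn⟩ := (hP.mul_diagonal hδ).inv_one_sub_of_isNilpotent
    (hP.isNilpotent_mul_diagonal hnil.neg hδ)
  have hone : 1 - -(W * A⁻¹ * S) * diagonal δ = 1 + W * A⁻¹ * (S * diagonal δ) := by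
    simp [Matrix.mul_assoc]
  rw [hone] at hG hGnn
  refine ⟨by rw [det_add_mul _ _ hA]; exact hA.mul hG, ?_⟩
  have hwood := add_mul_mul_inv_eq_sub A (S * diagonal δ) 1 W
    ((isUnit_iff_isUnit_det _).mpr hA) isUnit_one
    (by rwa [inv_one, isUnit_iff_isUnit_det])
  simp only [Matrix.mul_one, inv_one] at hwood
  rw [hwood]
  have hsign : -(A⁻¹ - A⁻¹ * (S * diagonal δ) * (1 + W * A⁻¹ * (S * diagonal δ))⁻¹ * W * A⁻¹) =
      -A⁻¹ + -A⁻¹ * (S * diagonal δ) * (1 + W * A⁻¹ * (S * diagonal δ))⁻¹ * W * -A⁻¹ := by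
    simp only [Matrix.neg_mul, Matrix.mul_neg, neg_neg]
    abel
  rw [hsign]
  exact hAinv.add ((((hAinv.mul (hS.mul_diagonal hδ)).mul hGnn).mul hW).mul hAinv)

theorem structural_hurwitz_iff_spectral_radius_zero_general
    {d ndg ncv nct : ℕ}
    (A : (Fin ndg → ℝ) → (Fin ncv → ℝ) → (Fin nct → ℝ) → Matrix (Fin d) (Fin d) ℝ)
    (Sct : Matrix (Fin d) (Fin nct) ℝ) (Wct : Matrix (Fin nct) (Fin d) ℝ)
    (hS : ∀ i j, 0 ≤ Sct i j) (hW : ∀ i j, 0 ≤ Wct i j)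
    (hdecomp : ∀ ρdg ρcv ρct,
      A ρdg ρcv ρct = A ρdg ρcv 0 + Sct * Matrix.diagonal ρct * Wct)
    (hMetz : ∀ ρdg ρcv ρct, (∀ i, 0 < ρdg i) → (∀ i, 0 < ρcv i) → (∀ i, 0 < ρct i) →
      IsMetzler (A ρdg ρcv ρct))
    (hH0 : ∀ ρdg ρcv, (∀ i, 0 < ρdg i) → (∀ i, 0 < ρcv i) → IsHurwitz (A ρdg ρcv 0)) :
    (∀ ρdg ρcv ρct, (∀ i, 0 < ρdg i) → (∀ i, 0 < ρcv i) → (∀ i, 0 < ρct i) →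
        IsHurwitz (A ρdg ρcv ρct)) ↔
      (∀ ρdg ρcv, (∀ i, 0 < ρdg i) → (∀ i, 0 < ρcv i) →
        specRad (Wct * (A ρdg ρcv 0)⁻¹ * Sct) = 0) := by
  have hconst : ∀ ρdg ρcv (t : ℝ), A ρdg ρcv (fun _ => t) = A ρdg ρcv 0 + t • (Sct * Wct) :=
    fun ρdg ρcv t => by
      rw [hdecomp, ← smul_one_eq_diagonal, Matrix.mul_smul, Matrix.mul_one, Matrix.smul_mul]
  have hA0 : ∀ ρdg ρcv, (∀ i, 0 < ρdg i) → (∀ i, 0 < ρcv i) →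
      IsUnit (A ρdg ρcv 0).det ∧ (-(A ρdg ρcv 0)⁻¹).IsNonneg := fun ρdg ρcv hdg hcv =>
    have hMetz0 : IsMetzler (A ρdg ρcv 0) := IsMetzler.of_forall_pos_add_smul fun ε hε =>
      hconst ρdg ρcv ε ▸ hMetz ρdg ρcv _ hdg hcv fun _ => hε
    hMetz0.isHurwitz_iff.mp (hH0 ρdg ρcv hdg hcv)
  constructor
  · intro hH ρdg ρcv hdg hcv
    obtain ⟨hU, hinv⟩ := hA0 ρdg ρcv hdg hcv
    refine specRad_mul_inv_mul_eq_zero_of_forall_add_smul hU hinv hS hW fun t ht => ?_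
    rw [← hconst]
    exact (hMetz _ _ _ hdg hcv fun _ => ht).isHurwitz_iff.mp (hH _ _ _ hdg hcv fun _ => ht)
  · intro hρ ρdg ρcv ρct hdg hcv hct
    obtain ⟨hU, hinv⟩ := hA0 ρdg ρcv hdg hcv
    rw [(hMetz ρdg ρcv ρct hdg hcv hct).isHurwitz_iff, hdecomp]
    exact isUnit_det_add_and_neg_inv_of_isNilpotent hU hinv hS hW (fun i => (hct i).le)
      (isNilpotent_of_specRad_eq_zero (hρ ρdg ρcv hdg hcv))

theorem structural_hurwitz_iff_spectral_radius_zero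
    {d ndg ncv nct : ℕ}
    (A : (Fin ndg → ℝ) → (Fin ncv → ℝ) → (Fin nct → ℝ) → Matrix (Fin d) (Fin d) ℝ)
    (Sct : Matrix (Fin d) (Fin nct) ℝ) (Wct : Matrix (Fin nct) (Fin d) ℝ)
    (hS : ∀ i j, 0 ≤ Sct i j) (hW : ∀ i j, 0 ≤ Wct i j)
    (hdecomp : ∀ ρdg ρcv ρct,
      A ρdg ρcv ρct = A ρdg ρcv 0 + Sct * Matrix.diagonal ρct * Wct)
    (hMetz : ∀ ρdg ρcv ρct, (∀ i, 0 < ρdg i) → (∀ i, 0 < ρcv i) → (∀ i, 0 < ρct i) →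
      IsMetzler (A ρdg ρcv ρct))
    (hmono : ∀ ρdg ρdg' ρcv ρct, (∀ i, ρdg i ≤ ρdg' i) →
      ∀ m n, A ρdg' ρcv ρct m n ≤ A ρdg ρcv ρct m n)
    (hH0 : ∀ ρdg ρcv, (∀ i, 0 < ρdg i) → (∀ i, 0 < ρcv i) → IsHurwitz (A ρdg ρcv 0)) :
    (∀ ρdg ρcv ρct, (∀ i, 0 < ρdg i) → (∀ i, 0 < ρcv i) → (∀ i, 0 < ρct i) →
        IsHurwitz (A ρdg ρcv ρct)) ↔
      (∀ ρdg ρcv, (∀ i, 0 < ρdg i) → (∀ i, 0 < ρcv i) →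
        specRad (Wct * (A ρdg ρcv 0)⁻¹ * Sct) = 0) :=
  structural_hurwitz_iff_spectral_radius_zero_general A Sct Wct hS hW hdecomp hMetz hH0
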